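/- arXiv:1709.09459 — 2 statements merged into one kernel-verified Lean document; each statement's English description precedes it below -/
import Mathlib

section
/- Let μ be a nonzero Borel measure on ℝ, ψ its logarithmic moment generating function, and λ ∈ U := interior of {ψ < ∞}. Then ψ is twice differentiable at λ and ψ''(λ) equals the variance of the tilted probability measure μ_λ(dx) = e^{λx − ψ(λ)} μ(dx). -/
/-! On the interior of `{Φ < ∞}`, `Φ` is analytic with `Φ⁽ⁿ⁾(λ) = ∫ xⁿ e^{λx} dμ`
(differentiation under the integral sign), so `ψ = log Φ` is analytic there and
`ψ'' = Φ''/Φ - (Φ'/Φ)²`, which is `E_{μ_λ}[X²] - E_{μ_λ}[X]²`. In Mathlib terms `ψ` is the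
cumulant generating function of `id` and `μ_λ` is `μ.tilted (λ * ·)`. -/

open scoped ENNReal
open Filter MeasureTheory

/-- The moment generating function `Φ(λ) = ∫ e^{λx} μ(dx) ∈ [0,∞]`. -/
noncomputable def mgf' (μ : Measure ℝ) (lam : ℝ) : ℝ≥0∞ :=
  ∫⁻ x, ENNReal.ofReal (Real.exp (lam * x)) ∂μ

/-- The logarithmic moment generating function `ψ(λ) = log Φ(λ)`, valued in `[-∞,∞]`
(with `log ∞ := ∞`). -/
noncomputable def logMgf (μ : Measure ℝ) (lam : ℝ) : EReal :=
  ENNReal.log (mgf' μ lam)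

/-- `ψ` as a real-valued function (meaningful on the effective domain where `Φ` is finite). -/
noncomputable def logMgfReal (μ : Measure ℝ) (lam : ℝ) : ℝ :=
  Real.log (mgf' μ lam).toReal

/-- The exponentially tilted measure `μ_λ(dx) = e^{λx - ψ(λ)} μ(dx)`. -/
noncomputable def tilted' (μ : Measure ℝ) (lam : ℝ) : Measure ℝ :=
  μ.withDensity (fun x => ENNReal.ofReal (Real.exp (lam * x - logMgfReal μ lam)))

open ProbabilityTheory

lemma mgf'_ne_top_iff {μ : Measure ℝ} {l : ℝ} :
    mgf' μ l ≠ ⊤ ↔ Integrable (fun x => Real.exp (l * x)) μ := by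
  rw [← lt_top_iff_ne_top, Integrable, hasFiniteIntegral_iff_ofReal
    (Eventually.of_forall fun x => (Real.exp_pos _).le)]
  exact (and_iff_right (by fun_prop)).symm

lemma setOf_mgf'_ne_top_eq_integrableExpSet (μ : Measure ℝ) :
    {l : ℝ | mgf' μ l ≠ ⊤} = integrableExpSet id μ :=
  Set.ext fun _ => mgf'_ne_top_iff

-- Off `integrableExpSet` this holds by junk values: `(⊤ : ℝ≥0∞).toReal = 0` and the Bochner
-- integral of a non-integrable function is `0`.
lemma logMgfReal_eq_cgf (μ : Measure ℝ) : logMgfReal μ = cgf id μ := by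
  funext l
  rw [logMgfReal, cgf, mgf, integral_eq_lintegral_of_nonneg_ae
    (Eventually.of_forall fun x => (Real.exp_pos _).le) (by fun_prop)]
  rfl

lemma tilted'_eq_tilted {μ : Measure ℝ} {l : ℝ}
    (hl : Integrable (fun x => Real.exp (l * x)) μ) :
    tilted' μ l = μ.tilted (l * ·) := by
  rcases eq_zero_or_neZero μ with rfl | hμ
  · simp [tilted']
  rw [tilted', Measure.tilted]
  congr with x
  rw [Real.exp_sub, logMgfReal_eq_cgf, exp_cgf (X := id) hl]
  rfl

lemma hasDerivAt_deriv_cgf {Ω : Type*} [MeasurableSpace Ω] {X : Ω → ℝ} {μ : Measure Ω} {t : ℝ}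
    (ht : t ∈ interior (integrableExpSet X μ)) :
    HasDerivAt (deriv (cgf X μ)) Var[X; μ.tilted (t * X ·)] t := by
  rw [variance_tilted_mul ht, iteratedDeriv_succ, iteratedDeriv_one]
  exact (analyticAt_cgf ht).deriv.differentiableAt.hasDerivAt

theorem logMgf_second_deriv_variance_tilted (μ : Measure ℝ) (hμ : μ ≠ 0) (lam : ℝ)
    (hlam : lam ∈ interior {l : ℝ | mgf' μ l ≠ ⊤}) :
    DifferentiableAt ℝ (logMgfReal μ) lam ∧
    HasDerivAt (deriv (logMgfReal μ))
      ((∫ x, x ^ 2 ∂(tilted' μ lam)) - (∫ x, x ∂(tilted' μ lam)) ^ 2) lam := by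
  rw [setOf_mgf'_ne_top_eq_integrableExpSet] at hlam
  have hint : Integrable (fun x => Real.exp (lam * x)) μ :=
    interior_subset (s := integrableExpSet id μ) hlam
  have : NeZero μ := ⟨hμ⟩
  have : IsProbabilityMeasure (μ.tilted (lam * id ·)) := isProbabilityMeasure_tilted hint
  have hderiv := hasDerivAt_deriv_cgf hlam
  rw [variance_eq_sub (memLp_tilted_mul hlam 2)] at hderiv
  rw [logMgfReal_eq_cgf, tilted'_eq_tilted hint]
  exact ⟨(analyticAt_cgf hlam).differentiableAt, hderiv⟩
end

section
/- Let A be an irreducible nonnegative matrix on a countable set S with ρ(A) < ∞, fix z ∈ S, and let ψ_z be the logarithmic moment generating function of excursions away from z (ψ_z(λ) = log Σ_{ω ∈ Ω̂_z} e^{λℓ(ω)} 𝒜(ω)). Then sup{λ ∈ ℝ : ψ_z(λ) < 0} = −log ρ(A). -/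
/-!
Cutting a loop at `z` at each of its returns to `z` splits it into excursions; this gives the
renewal identity `∑ₙ xⁿ Aⁿ(z,z) = (1 - φ_z(x))⁻¹` in `ℝ≥0∞`, so `φ_z(e^λ) < 1` exactly when the
Green function `∑ₙ e^{λn} Aⁿ(z,z)` is finite. By the root test this series converges when
`e^λ ρ < 1` (all its terms are finite since `n ↦ Aⁿ(z,z)` is supermultiplicative) and diverges
when `e^λ ρ > 1` (irreducibility makes `Aⁿ(z,z) > 0` for infinitely many `n`). Hence
`{λ | φ_z(λ) < 1}` lies between `(-∞, -log ρ)` and `(-∞, -log ρ]`.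
-/

open scoped ENNReal
open Filter

variable {S : Type*}

/-- Matrix powers of a nonnegative (possibly infinite-sum) matrix on a countable set. -/
noncomputable def matPow [DecidableEq S] (A : S → S → ℝ≥0∞) : ℕ → S → S → ℝ≥0∞
  | 0 => fun x y => if x = y then 1 else 0
  | n + 1 => fun x y => ∑' z, matPow A n x z * A z y

/-- Weight of a walk, given as the list of its successive vertices:
the product of the matrix entries along consecutive pairs. -/
noncomputable def chainWeight (A : S → S → ℝ≥0∞) : List S → ℝ≥0∞
  | [] => 1
  | [_] => 1
  | a :: b :: t => A a b * chainWeight A (b :: t)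

/-- Excursions away from `z`: walks `z :: l ++ [z]` of length `l.length + 1 ≥ 1`
from `z` to `z` (through edges of the graph of `A`) avoiding `z` at intermediate times.
An excursion is encoded by the list `l` of its intermediate vertices. -/
def ExcAvoid (A : S → S → ℝ≥0∞) (z : S) : Set (List S) :=
  {l | List.Chain (fun a b => 0 < A a b) z (l ++ [z]) ∧ ∀ v ∈ l, v ≠ z}

/-- The moment generating function `φ_z(λ) = Σ_{ω excursion away from z} e^{λ ℓ(ω)} 𝒜(ω)`. -/
noncomputable def phiz (A : S → S → ℝ≥0∞) (z : S) (lam : ℝ) : ℝ≥0∞ :=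
  ∑' l : ExcAvoid A z,
    ENNReal.ofReal (Real.exp (lam * (l.1.length + 1))) * chainWeight A (z :: (l.1 ++ [z]))

open Topology

section ChainWeight

variable (A : S → S → ℝ≥0∞)

lemma chainWeight_cons_cons (a b : S) (l : List S) :
    chainWeight A (a :: b :: l) = A a b * chainWeight A (b :: l) := rfl

lemma chainWeight_append_cons : ∀ (l : List S) (a : S) (m : List S),
    chainWeight A (l ++ a :: m) = chainWeight A (l ++ [a]) * chainWeight A (a :: m)
  | [], _, _ => by simp [chainWeight]
  | [_], _, _ => by simp [chainWeight]
  | b :: c :: l, a, m => by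
    simp only [List.cons_append, chainWeight_cons_cons]
    rw [← List.cons_append, chainWeight_append_cons (c :: l) a m, mul_assoc, List.cons_append]

lemma isChain_of_chainWeight_ne_zero : ∀ {u : S} {l : List S},
    chainWeight A (u :: l) ≠ 0 → List.IsChain (fun a b => 0 < A a b) (u :: l)
  | _, [], _ => List.IsChain.singleton _
  | _, _ :: _, h => by
    rw [chainWeight_cons_cons, mul_ne_zero_iff] at h
    exact .cons_cons (pos_iff_ne_zero.2 h.1) (isChain_of_chainWeight_ne_zero h.2)

end ChainWeight

section MatPow

variable [DecidableEq S] (A : S → S → ℝ≥0∞)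

lemma matPow_zero (x y : S) : matPow A 0 x y = if x = y then 1 else 0 := rfl

lemma matPow_succ (n : ℕ) (x y : S) :
    matPow A (n + 1) x y = ∑' w, matPow A n x w * A w y := rfl

lemma matPow_one (x y : S) : matPow A 1 x y = A x y := by
  simp [matPow_succ, matPow_zero]

lemma matPow_add (m n : ℕ) (x y : S) :
    matPow A (m + n) x y = ∑' w, matPow A m x w * matPow A n w y := by
  induction n generalizing y with
  | zero => simp [matPow_zero]
  | succ n ih =>
    rw [← add_assoc, matPow_succ]
    simp_rw [matPow_succ, ih, ← ENNReal.tsum_mul_right, ← ENNReal.tsum_mul_left, mul_assoc]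
    exact ENNReal.tsum_comm

lemma matPow_succ' (n : ℕ) (x y : S) :
    matPow A (n + 1) x y = ∑' w, A x w * matPow A n w y := by
  simp_rw [add_comm n, matPow_add, matPow_one]

lemma matPow_mul_matPow_le (m n : ℕ) (z : S) :
    matPow A m z z * matPow A n z z ≤ matPow A (m + n) z z := by
  rw [matPow_add]
  exact ENNReal.le_tsum z

lemma matPow_pow_le (k n : ℕ) (z : S) : matPow A n z z ^ k ≤ matPow A (k * n) z z := by
  induction k with
  | zero => simp [matPow_zero]
  | succ k ih =>
    rw [pow_succ, add_mul, one_mul]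
    exact (mul_le_mul_left ih _).trans (matPow_mul_matPow_le A _ _ z)

lemma frequently_matPow_self_pos {z : S} {m : ℕ} (hm : m ≠ 0) (hpos : 0 < matPow A m z z) :
    ∃ᶠ n in atTop, 0 < matPow A n z z :=
  frequently_atTop.2 fun N => ⟨N * m, Nat.le_mul_of_pos_right N (Nat.pos_of_ne_zero hm),
    (ENNReal.pow_pos hpos N).trans_le (matPow_pow_le A N m z)⟩

lemma matPow_self_ne_top {z : S} (h : ∀ᶠ n in atTop, matPow A n z z ≠ ⊤) (n : ℕ) :
    matPow A n z z ≠ ⊤ := by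
  rcases Nat.eq_zero_or_pos n with rfl | hn
  · simp [matPow_zero]
  · intro htop
    obtain ⟨N, hN⟩ := eventually_atTop.1 h
    have := matPow_pow_le A (N + 1) n z
    rw [htop, ENNReal.top_pow N.succ_ne_zero, top_le_iff] at this
    exact hN _ (N.le_succ.trans (Nat.le_mul_of_pos_right _ hn)) this

def listLengthSuccEquiv (n : ℕ) :
    S × {l : List S // l.length = n} ≃ {l : List S // l.length = n + 1} where
  toFun p := ⟨p.1 :: p.2.1, by simp [p.2.2]⟩
  invFun
    | ⟨a :: l, h⟩ => (a, ⟨l, Nat.succ_injective h⟩)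
  left_inv _ := rfl
  right_inv
    | ⟨_ :: _, _⟩ => rfl

lemma matPow_succ_eq_tsum_chainWeight (n : ℕ) (u y : S) :
    matPow A (n + 1) u y =
      ∑' l : {l : List S // l.length = n}, chainWeight A (u :: (l.1 ++ [y])) := by
  induction n generalizing u with
  | zero =>
    rw [matPow_one, tsum_eq_single (⟨[], rfl⟩ : {l : List S // l.length = 0})
      fun l hl => (hl (Subtype.ext (List.length_eq_zero_iff.1 l.2))).elim]
    simp [chainWeight]
  | succ n ih =>
    rw [matPow_succ', ← (listLengthSuccEquiv n).tsum_eq, ENNReal.tsum_prod']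
    refine tsum_congr fun w => ?_
    rw [ih, ← ENNReal.tsum_mul_left]
    rfl

end MatPow

section Renewal

variable (A : S → S → ℝ≥0∞) (z : S) (x : ℝ≥0∞)

/-- `l` lists the intermediate vertices of the loop `z :: l ++ [z]`, so `l.count z = k` says
that the loop returns to `z` exactly `k` times before its end. -/
noncomputable def loopWeight (l : List S) : ℝ≥0∞ :=
  x ^ (l.length + 1) * chainWeight A (z :: (l ++ [z]))

lemma loopWeight_append_cons (l₁ l₂ : List S) :
    loopWeight A z x (l₁ ++ z :: l₂) = loopWeight A z x l₁ * loopWeight A z x l₂ := by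
  simp only [loopWeight, List.length_append, List.length_cons, List.append_assoc,
    List.cons_append]
  rw [← List.cons_append, chainWeight_append_cons, List.cons_append]
  ring

variable [DecidableEq S]

/-- The generating function `φ_z` of excursions away from `z`, in the variable `x = e^λ`. -/
noncomputable def excursionGen : ℝ≥0∞ :=
  ∑' l : {l : List S // l.count z = 0}, loopWeight A z x l

lemma tsum_loopWeight_eq_tsum_matPow :
    ∑' l : List S, loopWeight A z x l = ∑' n : ℕ, x ^ (n + 1) * matPow A (n + 1) z z := by
  rw [← (Equiv.sigmaFiberEquiv List.length).tsum_eq, ENNReal.tsum_sigma']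
  refine tsum_congr fun n => ?_
  rw [matPow_succ_eq_tsum_chainWeight, ← ENNReal.tsum_mul_left]
  refine tsum_congr fun l => ?_
  simp [loopWeight, Equiv.sigmaFiberEquiv, l.2]

lemma takeWhile_append_cons_of_notMem {l₁ : List S} (h : z ∉ l₁) (l₂ : List S) :
    (l₁ ++ z :: l₂).takeWhile (· != z) = l₁ := by
  rw [List.takeWhile_append_of_pos fun a ha => by simpa using ne_of_mem_of_not_mem ha h]
  simp

noncomputable def excursionSplitEquiv (k : ℕ) :
    {l : List S // l.count z = 0} × {l : List S // l.count z = k} ≃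
      {l : List S // l.count z = k + 1} :=
  Equiv.ofBijective (fun p => ⟨p.1.1 ++ z :: p.2.1, by simp [p.1.2, p.2.2]⟩) <| by
    constructor
    · rintro ⟨⟨l₁, h₁⟩, ⟨l₂, h₂⟩⟩ ⟨⟨l₁', h₁'⟩, ⟨l₂', h₂'⟩⟩ h
      have h := congrArg Subtype.val h
      have e₁ : l₁ = l₁' := by
        simpa [takeWhile_append_cons_of_notMem z (List.count_eq_zero.1 h₁),
          takeWhile_append_cons_of_notMem z (List.count_eq_zero.1 h₁')] using
          congrArg (List.takeWhile (· != z)) h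
      subst e₁
      simp_all
    · rintro ⟨l, hl⟩
      have hz : z ∈ l := List.count_pos_iff.1 (by rw [hl]; exact k.succ_pos)
      obtain ⟨l₁, l₂, h₁, rfl, -⟩ := List.exists_erase_eq hz
      exact ⟨(⟨l₁, List.count_eq_zero.2 h₁⟩,
        ⟨l₂, by simpa [List.count_eq_zero.2 h₁] using hl⟩), rfl⟩

lemma tsum_loopWeight_count_eq (k : ℕ) :
    ∑' l : {l : List S // l.count z = k}, loopWeight A z x l = excursionGen A z x ^ (k + 1) := by
  induction k with
  | zero => rw [zero_add, pow_one, excursionGen]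
  | succ k ih =>
    rw [← (excursionSplitEquiv z k).tsum_eq, ENNReal.tsum_prod', pow_succ', ← ih, excursionGen,
      ← ENNReal.tsum_mul_right]
    refine tsum_congr fun l₁ => ?_
    rw [← ENNReal.tsum_mul_left]
    exact tsum_congr fun l₂ => loopWeight_append_cons A z x l₁.1 l₂.1

lemma tsum_loopWeight_eq_tsum_pow :
    ∑' l : List S, loopWeight A z x l = ∑' k : ℕ, excursionGen A z x ^ (k + 1) := by
  rw [← (Equiv.sigmaFiberEquiv (List.count z)).tsum_eq, ENNReal.tsum_sigma']
  exact tsum_congr (tsum_loopWeight_count_eq A z x)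

/-- In `ℝ≥0∞` both sides are `⊤` as soon as `excursionGen A z x ≥ 1`. -/
theorem tsum_pow_mul_matPow_eq_inv :
    ∑' n : ℕ, x ^ n * matPow A n z z = (1 - excursionGen A z x)⁻¹ := by
  rw [tsum_eq_zero_add' ENNReal.summable, ← tsum_loopWeight_eq_tsum_matPow,
    tsum_loopWeight_eq_tsum_pow, ← ENNReal.tsum_geometric,
    tsum_eq_zero_add' (f := fun k => excursionGen A z x ^ k) ENNReal.summable]
  simp [matPow_zero]

lemma phiz_eq_excursionGen (lam : ℝ) :
    phiz A z lam = excursionGen A z (ENNReal.ofReal (Real.exp lam)) := by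
  have hweight (l : List S) : ENNReal.ofReal (Real.exp (lam * (l.length + 1))) *
      chainWeight A (z :: (l ++ [z])) = loopWeight A z (ENNReal.ofReal (Real.exp lam)) l := by
    rw [loopWeight, ← ENNReal.ofReal_pow (Real.exp_nonneg _), ← Real.exp_nat_mul]
    push_cast
    ring_nf
  simp only [phiz, excursionGen, hweight]
  rw [tsum_subtype (ExcAvoid A z)]
  refine Eq.trans ?_ (tsum_subtype {l : List S | l.count z = 0} _).symm
  refine tsum_congr fun l => ?_
  by_cases hz : z ∈ l
  · rw [Set.indicator_of_notMem fun h => h.2 z hz rfl,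
      Set.indicator_of_notMem (s := {l : List S | l.count z = 0}) (List.count_pos_iff.2 hz).ne']
  · rw [Set.indicator_of_mem (show l ∈ {l : List S | l.count z = 0} from List.count_eq_zero.2 hz)]
    by_cases hl : l ∈ ExcAvoid A z
    · rw [Set.indicator_of_mem hl]
    · refine (Set.indicator_of_notMem hl _).trans (mul_eq_zero_of_right _ ?_).symm
      by_contra hc
      exact hl ⟨isChain_of_chainWeight_ne_zero A hc, fun v hv hvz => hz (hvz ▸ hv)⟩

end Renewal

section RootTest

variable {a : ℕ → ℝ≥0∞} {ρ x : ℝ≥0∞}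

lemma ENNReal.tsum_ne_top_of_eventually_le {f g : ℕ → ℝ≥0∞} (hf : ∀ n, f n ≠ ⊤)
    (hfg : ∀ᶠ n in atTop, f n ≤ g n) (hg : ∑' n, g n ≠ ⊤) : ∑' n, f n ≠ ⊤ := by
  obtain ⟨N, hN⟩ := eventually_atTop.1 hfg
  have hle (n : ℕ) : f n ≤ (if n < N then f n else 0) + g n := by
    split_ifs with h
    · exact le_self_add
    · exact (hN n (not_lt.1 h)).trans_eq (zero_add _).symm
  refine ne_top_of_le_ne_top ?_ (ENNReal.tsum_le_tsum hle)
  rw [ENNReal.tsum_add, tsum_eq_sum (s := Finset.range N) fun n hn => if_neg (by simpa using hn)]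
  exact ENNReal.add_ne_top.2 ⟨ENNReal.sum_ne_top.2 fun n _ => by split_ifs <;> simp [hf], hg⟩

lemma ENNReal.mul_rpow_inv_natCast_pow (x y : ℝ≥0∞) {n : ℕ} (hn : n ≠ 0) :
    (x * y ^ ((n : ℝ)⁻¹)) ^ n = x ^ n * y := by
  rw [mul_pow, ENNReal.rpow_inv_natCast_pow hn]

lemma eventually_ne_top_of_tendsto_rpow_inv
    (ha : Tendsto (fun n : ℕ => a n ^ ((n : ℝ)⁻¹)) (atTop ⊓ 𝓟 {n | 0 < a n}) (𝓝 ρ))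
    (hρ : ρ ≠ ⊤) : ∀ᶠ n in atTop, a n ≠ ⊤ := by
  filter_upwards [eventually_inf_principal.1 (ha.eventually (gt_mem_nhds hρ.lt_top)),
    eventually_ne_atTop 0] with n h hn htop
  rw [htop, ENNReal.top_rpow_of_pos (by positivity)] at h
  exact lt_irrefl _ (h ENNReal.zero_lt_top)

lemma tsum_pow_mul_ne_top_of_mul_lt_one
    (ha : Tendsto (fun n : ℕ => a n ^ ((n : ℝ)⁻¹)) (atTop ⊓ 𝓟 {n | 0 < a n}) (𝓝 ρ))
    (hfin : ∀ n, a n ≠ ⊤) (hx : x ≠ ⊤) (hxρ : x * ρ < 1) : ∑' n, x ^ n * a n ≠ ⊤ := by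
  obtain ⟨c, hxc, hc⟩ := exists_between hxρ
  refine ENNReal.tsum_ne_top_of_eventually_le
    (fun n => ENNReal.mul_ne_top (ENNReal.pow_ne_top hx) (hfin n)) ?_
    (by rw [ENNReal.tsum_geometric]; exact ENNReal.inv_ne_top.2 (tsub_pos_of_lt hc).ne')
  filter_upwards [eventually_inf_principal.1 ((ENNReal.Tendsto.const_mul ha (.inr hx)).eventually
    (gt_mem_nhds hxc)), eventually_ne_atTop 0] with n h hn
  rcases eq_zero_or_pos (a n) with h0 | hpos
  · simp [h0]
  · rw [← ENNReal.mul_rpow_inv_natCast_pow x (a n) hn]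
    exact pow_le_pow_left₀ zero_le (h hpos).le n

lemma tsum_pow_mul_eq_top_of_one_lt_mul
    (ha : Tendsto (fun n : ℕ => a n ^ ((n : ℝ)⁻¹)) (atTop ⊓ 𝓟 {n | 0 < a n}) (𝓝 ρ))
    (hpos : ∃ᶠ n in atTop, 0 < a n) (hxρ : 1 < x * ρ) : ∑' n, x ^ n * a n = ⊤ := by
  obtain ⟨c, hc, hcx⟩ := exists_between hxρ
  have hρ0 : ρ ≠ 0 := by rintro rfl; simp at hxρ
  have hlarge := eventually_inf_principal.1 ((ENNReal.Tendsto.const_mul ha (.inl hρ0)).eventually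
    (lt_mem_nhds hcx))
  by_contra htop
  have hsmall := (ENNReal.tendsto_atTop_zero_of_tsum_ne_top htop).eventually (gt_mem_nhds one_pos)
  obtain ⟨n, hn, h, hsm, hn0⟩ :=
    (hpos.and_eventually (hlarge.and (hsmall.and (eventually_ne_atTop 0)))).exists
  rw [← ENNReal.mul_rpow_inv_natCast_pow x (a n) hn0] at hsm
  exact hsm.not_ge (one_le_pow₀ (hc.trans (h hn)).le)

end RootTest

lemma ofReal_exp_mul_eq_ofReal_exp_add_log {ρ : ℝ≥0∞} (hρ0 : 0 < ρ) (hρT : ρ ≠ ⊤) (lam : ℝ) :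
    ENNReal.ofReal (Real.exp lam) * ρ = ENNReal.ofReal (Real.exp (lam + Real.log ρ.toReal)) := by
  rw [Real.exp_add, Real.exp_log (ENNReal.toReal_pos hρ0.ne' hρT),
    ENNReal.ofReal_mul (Real.exp_nonneg _), ENNReal.ofReal_toReal hρT]

theorem excursion_mgf_threshold_eq_neg_log_spectral_radius_general [DecidableEq S]
    (A : S → S → ℝ≥0∞)
    (hirr : ∀ x y : S, ∃ n, 1 ≤ n ∧ 0 < matPow A n x y)
    (z : S) (ρ : ℝ≥0∞) (hρ0 : 0 < ρ) (hρT : ρ ≠ ⊤)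
    (hρ : ∀ x, Tendsto (fun n : ℕ => (matPow A n x x) ^ ((n : ℝ)⁻¹))
        (atTop ⊓ Filter.principal {n : ℕ | 0 < matPow A n x x}) (nhds ρ)) :
    sSup {lam : ℝ | phiz A z lam < 1} = - Real.log ρ.toReal := by
  obtain ⟨m, hm, hpos⟩ := hirr z z
  have hfin := matPow_self_ne_top A (eventually_ne_top_of_tendsto_rpow_inv (hρ z) hρT)
  have hphiz (lam : ℝ) : phiz A z lam < 1 ↔
      ∑' n, ENNReal.ofReal (Real.exp lam) ^ n * matPow A n z z ≠ ⊤ := by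
    rw [phiz_eq_excursionGen, tsum_pow_mul_matPow_eq_inv, ENNReal.inv_ne_top, Ne,
      tsub_eq_zero_iff_le, not_le]
  have hlt (lam : ℝ) (h : lam < -Real.log ρ.toReal) : phiz A z lam < 1 := by
    refine (hphiz lam).2 (tsum_pow_mul_ne_top_of_mul_lt_one (hρ z) hfin ENNReal.ofReal_ne_top ?_)
    rw [ofReal_exp_mul_eq_ofReal_exp_add_log hρ0 hρT, ENNReal.ofReal_lt_one, Real.exp_lt_one_iff]
    linarith
  have hle (lam : ℝ) (h : phiz A z lam < 1) : lam ≤ -Real.log ρ.toReal := by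
    by_contra! h'
    refine (hphiz lam).1 h (tsum_pow_mul_eq_top_of_one_lt_mul (hρ z)
      (frequently_matPow_self_pos A (by omega) hpos) ?_)
    rw [ofReal_exp_mul_eq_ofReal_exp_add_log hρ0 hρT, ENNReal.one_lt_ofReal, Real.one_lt_exp_iff]
    linarith
  refine csSup_eq_of_forall_le_of_forall_lt_exists_gt ⟨_, hlt _ (sub_one_lt _)⟩ hle fun w hw => ?_
  obtain ⟨lam, hw, hlam⟩ := exists_between hw
  exact ⟨lam, hlt lam hlam, hw⟩

theorem excursion_mgf_threshold_eq_neg_log_spectral_radius [Countable S] [DecidableEq S]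
    (A : S → S → ℝ≥0∞) (hfin : ∀ x y, A x y ≠ ⊤)
    (hirr : ∀ x y : S, ∃ n, 1 ≤ n ∧ 0 < matPow A n x y)
    (z : S) (ρ : ℝ≥0∞) (hρ0 : 0 < ρ) (hρT : ρ ≠ ⊤)
    (hρ : ∀ x, Tendsto (fun n : ℕ => (matPow A n x x) ^ ((n : ℝ)⁻¹))
        (atTop ⊓ Filter.principal {n : ℕ | 0 < matPow A n x x}) (nhds ρ)) :
    sSup {lam : ℝ | phiz A z lam < 1} = - Real.log ρ.toReal :=
  excursion_mgf_threshold_eq_neg_log_spectral_radius_general A hirr z ρ hρ0 hρT hρ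
end
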